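/- Let θ = a/b be rational with gcd-reduced b ≥ 1. Define π(U) = z₁ · Σ_{k=1}^b e^{2πi a k / b} e_{k,k} and π(V) = z₂ · Σ_{k=1}^b e_{k, k−1 (mod b)} in C(𝕋²) ⊗ M_b, where z₁, z₂ are the coordinate functions on 𝕋² and e_{k,l} the matrix units of M_b. Then π(U), π(V) are unitaries satisfying π(U)π(V) = e^{2πi a/b} π(V)π(U), and the induced *-homomorphism π : A_{a/b} → C(𝕋²) ⊗ M_b is trace-preserving, where C(𝕋²) ⊗ M_b carries the trace given by Haar integration tensored with the normalized matrix trace. -/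

import Mathlib

/-!
On the torus, `π(U)` and `π(V)` are the characters `z₁`, `z₂` times the constant clock and
shift matrices. These are unitary, and they `ω`-commute because the clock entries are the
successive powers of the `b`-th root of unity `ω = e^{2πia/b}`. Hence `π(U^m V^n)` is
`z₁^m z₂^n` times a constant matrix, so its Haar integral vanishes unless `m = n = 0`, where the
element is `1` and the normalized trace gives `1`.
-/

open Complex
open scoped Matrix.Norms.L2Operator

/-- The 2-torus `𝕋²`. -/
abbrev TwoTorus := AddCircle (1 : ℝ) × AddCircle (1 : ℝ)

/-- `π(U) = z₁ · Σ_{k=1}^b e^{2πiak/b} e_{k,k}` as a continuous matrix-valued function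
on `𝕋²`, an element of `C(𝕋²) ⊗ M_b = C(𝕋², M_b)`. -/
noncomputable def ratP (a : ℤ) (b : ℕ) [NeZero b] :
    C(TwoTorus, Matrix (Fin b) (Fin b) ℂ) :=
  ⟨fun t => fourier 1 t.1 •
      Matrix.diagonal (fun k : Fin b =>
        Complex.exp (2 * Real.pi * I * a * ((k : ℕ) + 1) / b)),
    (((fourier 1).continuous.comp continuous_fst).smul continuous_const)⟩

/-- `π(V) = z₂ · Σ_{k=1}^b e_{k,k−1 (mod b)}` as an element of `C(𝕋², M_b)`. -/
noncomputable def ratQ (b : ℕ) [NeZero b] :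
    C(TwoTorus, Matrix (Fin b) (Fin b) ℂ) :=
  ⟨fun t => fourier 1 t.2 •
      Matrix.of (fun k l : Fin b => if k = l + 1 then (1 : ℂ) else 0),
    (((fourier 1).continuous.comp continuous_snd).smul continuous_const)⟩

/-- The trace: Haar integration on `𝕋²` tensored with the normalized matrix trace. -/
noncomputable def ratTrace (b : ℕ) (x : C(TwoTorus, Matrix (Fin b) (Fin b) ℂ)) : ℂ :=
  (∫ t : TwoTorus, Matrix.trace (x t)) / b

open MeasureTheory

section Circle

variable {T : ℝ}

theorem fourier_mem_unitary (n : ℤ) (x : AddCircle T) : fourier n x ∈ unitary ℂ := by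
  rw [Unitary.mem_iff, Complex.star_def, ← fourier_neg, ← fourier_add, ← fourier_add,
    neg_add_cancel, add_neg_cancel, fourier_zero]
  exact ⟨rfl, rfl⟩

variable [hT : Fact (0 < T)]

theorem integral_fourier (n : ℤ) :
    ∫ x : AddCircle T, fourier n x = if n = 0 then (T : ℂ) else 0 := by
  split_ifs with hn
  · subst hn
    simp [measureReal_def, AddCircle.measure_univ, hT.out.le]
  · have h := integral_add_left_eq_self (μ := volume) (fun x => (fourier n x : ℂ))
      ((T / 2 / n : ℝ) : AddCircle T)
    -- translating by half a period of `fourier n` negates it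
    simp only [add_comm _ (_ : AddCircle T), fourier_add_half_inv_index hn hT.out,
      integral_neg] at h
    exact self_eq_neg.mp h.symm

theorem integral_fourier_mul_fourier {T' : ℝ} [Fact (0 < T')] (m n : ℤ) :
    ∫ t : AddCircle T × AddCircle T', fourier m t.1 * fourier n t.2 =
      if m = 0 ∧ n = 0 then (T * T' : ℂ) else 0 := by
  rw [Measure.volume_eq_prod, integral_prod_mul (fun x => fourier m x) (fun y => fourier n y),
    integral_fourier, integral_fourier]
  by_cases hm : m = 0 <;> by_cases hn : n = 0 <;> simp [hm, hn]

end Circle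

namespace ContinuousMap

variable {X R : Type*} [TopologicalSpace X] [Monoid R] [StarMul R] [TopologicalSpace R]
  [ContinuousMul R] [ContinuousStar R]

theorem mem_unitary_iff {f : C(X, R)} : f ∈ unitary C(X, R) ↔ ∀ t, f t ∈ unitary R := by
  simp only [Unitary.mem_iff, ContinuousMap.ext_iff, forall_and]
  rfl

end ContinuousMap

section FourierSmul

variable {X R : Type*} [TopologicalSpace X] [Ring R] [StarRing R] [Algebra ℂ R]
  [StarModule ℂ R] [TopologicalSpace R] [IsTopologicalRing R] [ContinuousStar R]
  {T : ℝ} {g : X → AddCircle T} {M : R}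

theorem fourier_smul_mem_unitary {f : C(X, R)} (hM : M ∈ unitary R)
    (hf : ∀ t, f t = fourier 1 (g t) • M) : f ∈ unitary C(X, R) :=
  ContinuousMap.mem_unitary_iff.mpr fun t =>
    hf t ▸ Unitary.smul_mem_of_mem (fourier_mem_unitary 1 (g t)) hM

theorem coe_zpow_apply_of_fourier_smul {u : unitary C(X, R)} {M : unitary R}
    (hu : ∀ t, (u : C(X, R)) t = fourier 1 (g t) • (M : R)) (m : ℤ) (t : X) :
    ((u ^ m : unitary C(X, R)) : C(X, R)) t = fourier m (g t) • ((M ^ m : unitary R) : R) := by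
  induction m using Int.induction_on with
  | zero => simp
  | succ k ih =>
    rw [zpow_add_one, zpow_add_one, Submonoid.coe_mul, ContinuousMap.mul_apply, ih, hu,
      Submonoid.coe_mul, smul_mul_smul_comm, ← fourier_add]
  | pred k ih =>
    rw [zpow_sub_one, zpow_sub_one, Submonoid.coe_mul, ContinuousMap.mul_apply, ih,
      ← Unitary.star_eq_inv, ← Unitary.star_eq_inv, Unitary.coe_star, Submonoid.coe_mul,
      Unitary.coe_star, ContinuousMap.star_apply, hu, star_smul, Complex.star_def,
      ← fourier_neg, smul_mul_smul_comm, ← fourier_add, sub_eq_add_neg]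

end FourierSmul

theorem Unitary.apply_coe_zpow_mul_zpow {R S F : Type*} [Monoid R] [StarMul R] [Monoid S]
    [StarMul S] [FunLike F R S] [StarHomClass F R S] [MonoidHomClass F R S] (φ : F)
    {U V : unitary R} {u v : unitary S} (hU : φ U = u) (hV : φ V = v) (m n : ℤ) :
    φ ((U ^ m * V ^ n : unitary R) : R) = ((u ^ m * v ^ n : unitary S) : S) := by
  have hU' : Unitary.map (StarMonoidHom.ofClass φ) U = u := Subtype.ext hU
  have hV' : Unitary.map (StarMonoidHom.ofClass φ) V = v := Subtype.ext hV
  change ((Unitary.map (StarMonoidHom.ofClass φ) (U ^ m * V ^ n) : unitary S) : S) = _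
  rw [map_mul, map_zpow, map_zpow, hU', hV']

namespace Matrix

variable {n α : Type*} [Fintype n] [DecidableEq n] [Semiring α]

theorem diagonal_mem_unitary [StarRing α] {d : n → α} (hd : ∀ i, d i ∈ unitary α) :
    diagonal d ∈ unitary (Matrix n n α) := by
  simp only [Unitary.mem_iff, star_eq_conjTranspose, diagonal_conjTranspose,
    diagonal_mul_diagonal, ← diagonal_one, diagonal_eq_diagonal_iff]
  exact ⟨fun i => (hd i).1, fun i => (hd i).2⟩

theorem permMatrix_mem_unitary [StarRing α] (σ : Equiv.Perm n) :
    σ.permMatrix α ∈ unitary (Matrix n n α) := by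
  simp [Unitary.mem_iff, star_eq_conjTranspose, ← PEquiv.toMatrix_trans, ← Equiv.toPEquiv_trans,
    Equiv.Perm.inv_def]

theorem diagonal_mul_permMatrix {d : n → α} {c : α} (σ : Equiv.Perm n)
    (hd : ∀ j, d (σ.symm j) = c * d j) :
    diagonal d * σ.permMatrix α = c • (σ.permMatrix α * diagonal d) := by
  ext i j
  simp only [diagonal_mul, mul_diagonal, PEquiv.toMatrix_apply, Equiv.toPEquiv_apply,
    Option.mem_some_iff, ite_mul, one_mul, zero_mul, smul_apply, smul_eq_mul, mul_ite, mul_one,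
    mul_zero]
  split_ifs with h
  · rw [← hd, ← h, Equiv.symm_apply_apply]
  · rfl

end Matrix

section CyclicRepresentation

variable (b : ℕ)

noncomputable def clockMatrix (ω : ℂ) : Matrix (Fin b) (Fin b) ℂ :=
  Matrix.diagonal fun k => ω ^ ((k : ℕ) + 1)

def shiftMatrix [NeZero b] : Matrix (Fin b) (Fin b) ℂ :=
  Equiv.Perm.permMatrix ℂ (Equiv.subRight (1 : Fin b))

variable {b}

theorem clockMatrix_mem_unitary {ω : ℂ} (hω : ω ∈ unitary ℂ) :
    clockMatrix b ω ∈ unitary (Matrix (Fin b) (Fin b) ℂ) :=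
  Matrix.diagonal_mem_unitary fun _ => pow_mem hω _

theorem shiftMatrix_mem_unitary [NeZero b] : shiftMatrix b ∈ unitary (Matrix (Fin b) (Fin b) ℂ) :=
  Matrix.permMatrix_mem_unitary _

theorem clockMatrix_mul_shiftMatrix [NeZero b] {ω : ℂ} (hω : ω ^ b = 1) :
    clockMatrix b ω * shiftMatrix b = ω • (shiftMatrix b * clockMatrix b ω) := by
  refine Matrix.diagonal_mul_permMatrix _ fun j => ?_
  have hsucc : ω ^ ((j + 1 : Fin b) : ℕ) = ω ^ ((j : ℕ) + 1) := by
    rw [Fin.val_add, Fin.val_one', Nat.add_mod_mod, ← pow_eq_pow_mod _ hω]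
  change ω ^ (((j + 1 : Fin b) : ℕ) + 1) = _
  rw [pow_succ, hsucc, mul_comm]

end CyclicRepresentation

theorem exp_div_mem_unitary (a : ℤ) (b : ℕ) :
    Complex.exp (2 * Real.pi * I * ((a : ℝ) / b)) ∈ unitary ℂ := by
  have h := fourier_mem_unitary (T := 1) 1 ((a : ℝ) / (b : ℝ))
  rw [fourier_coe_apply] at h
  simpa using h

theorem exp_div_pow_eq_one (a : ℤ) {b : ℕ} [NeZero b] :
    Complex.exp (2 * Real.pi * I * ((a : ℝ) / b)) ^ b = 1 := by
  have hb : (b : ℂ) ≠ 0 := Nat.cast_ne_zero.mpr (NeZero.ne b)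
  rw [← Complex.exp_nat_mul, ← Complex.exp_int_mul_two_pi_mul_I a]
  congr 1
  push_cast
  field_simp

theorem exp_mul_div_eq_pow (a : ℤ) (b k : ℕ) :
    Complex.exp (2 * Real.pi * I * a * ((k : ℂ) + 1) / b) =
      Complex.exp (2 * Real.pi * I * ((a : ℝ) / b)) ^ (k + 1) := by
  rw [← Complex.exp_nat_mul]
  push_cast
  ring_nf

section RationalRotation

theorem ratTrace_eq_of_apply_eq {b : ℕ} {x : C(TwoTorus, Matrix (Fin b) (Fin b) ℂ)} {m n : ℤ}
    {M : Matrix (Fin b) (Fin b) ℂ} (hx : ∀ t, x t = (fourier m t.1 * fourier n t.2) • M) :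
    ratTrace b x = if m = 0 ∧ n = 0 then M.trace / b else 0 := by
  simp only [ratTrace, hx, Matrix.trace_smul, smul_eq_mul, integral_mul_const,
    integral_fourier_mul_fourier]
  split_ifs <;> simp

variable (a : ℤ) (b : ℕ) [NeZero b]

theorem ratP_apply (t : TwoTorus) :
    ratP a b t =
      fourier 1 t.1 • clockMatrix b (Complex.exp (2 * Real.pi * I * ((a : ℝ) / b))) := by
  change fourier 1 t.1 • Matrix.diagonal _ = _
  simp only [clockMatrix, exp_mul_div_eq_pow]

theorem ratQ_apply (t : TwoTorus) : ratQ b t = fourier 1 t.2 • shiftMatrix b := by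
  change fourier 1 t.2 • Matrix.of _ = _
  congr 1
  ext k l
  simp only [shiftMatrix, PEquiv.toMatrix_apply, Equiv.toPEquiv_apply, Option.mem_some_iff,
    Equiv.subRight_apply, Matrix.of_apply, sub_eq_iff_eq_add]

theorem ratP_mem_unitary : ratP a b ∈ unitary C(TwoTorus, Matrix (Fin b) (Fin b) ℂ) :=
  fourier_smul_mem_unitary (g := Prod.fst) (clockMatrix_mem_unitary (exp_div_mem_unitary a b))
    (ratP_apply a b)

theorem ratQ_mem_unitary : ratQ b ∈ unitary C(TwoTorus, Matrix (Fin b) (Fin b) ℂ) :=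
  fourier_smul_mem_unitary (g := Prod.snd) shiftMatrix_mem_unitary (ratQ_apply b)

theorem ratP_mul_ratQ :
    ratP a b * ratQ b = Complex.exp (2 * Real.pi * I * ((a : ℝ) / b)) • (ratQ b * ratP a b) := by
  ext1 t
  rw [ContinuousMap.smul_apply, ContinuousMap.mul_apply, ContinuousMap.mul_apply, ratP_apply,
    ratQ_apply, smul_mul_smul_comm, smul_mul_smul_comm,
    clockMatrix_mul_shiftMatrix (exp_div_pow_eq_one a), smul_smul, smul_smul]
  ring_nf

theorem ratTrace_zpow_mul_zpow {u v : unitary C(TwoTorus, Matrix (Fin b) (Fin b) ℂ)}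
    (hu : (u : C(TwoTorus, Matrix (Fin b) (Fin b) ℂ)) = ratP a b)
    (hv : (v : C(TwoTorus, Matrix (Fin b) (Fin b) ℂ)) = ratQ b) (m n : ℤ) :
    ratTrace b ((u ^ m * v ^ n : unitary C(TwoTorus, Matrix (Fin b) (Fin b) ℂ)) :
      C(TwoTorus, Matrix (Fin b) (Fin b) ℂ)) = if m = 0 ∧ n = 0 then 1 else 0 := by
  let C : unitary (Matrix (Fin b) (Fin b) ℂ) :=
    ⟨_, clockMatrix_mem_unitary (exp_div_mem_unitary a b)⟩
  let S : unitary (Matrix (Fin b) (Fin b) ℂ) := ⟨_, shiftMatrix_mem_unitary⟩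
  have hx : ∀ t, ((u ^ m * v ^ n : unitary _) : C(TwoTorus, Matrix (Fin b) (Fin b) ℂ)) t =
      (fourier m t.1 * fourier n t.2) • ((C ^ m * S ^ n : unitary _) : Matrix _ _ ℂ) := by
    intro t
    rw [Submonoid.coe_mul, ContinuousMap.mul_apply,
      coe_zpow_apply_of_fourier_smul (g := Prod.fst) (M := C) (fun t => hu ▸ ratP_apply a b t),
      coe_zpow_apply_of_fourier_smul (g := Prod.snd) (M := S) (fun t => hv ▸ ratQ_apply b t),
      smul_mul_smul_comm, Submonoid.coe_mul]
  rw [ratTrace_eq_of_apply_eq hx]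
  split_ifs with h
  · obtain ⟨rfl, rfl⟩ := h
    simp [NeZero.ne b]
  · rfl

end RationalRotation

theorem rational_quantum_torus_embedding_general
    (a : ℤ) (b : ℕ) [NeZero b]
    (A : Type) [NormedRing A] [StarRing A] [NormedAlgebra ℂ A]
    (U V : unitary A)
    (huniv : ∀ (B : Type) [NormedRing B] [StarRing B] [CStarRing B]
      [NormedAlgebra ℂ B] [StarModule ℂ B] [CompleteSpace B],
      ∀ u v : unitary B,
      ((u : B) * v = Complex.exp (2 * Real.pi * I * ((a : ℝ) / b)) • ((v : B) * (u : B))) →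
      ∃ φ : A →⋆ₐ[ℂ] B, φ U = u ∧ φ V = v)
    (τ : A →ₗ[ℂ] ℂ)
    (hcanonical : ∀ m n : ℤ,
      τ (((U ^ m * V ^ n : unitary A) : A)) = if m = 0 ∧ n = 0 then 1 else 0) :
    (ratP a b ∈ unitary C(TwoTorus, Matrix (Fin b) (Fin b) ℂ)) ∧
    (ratQ b ∈ unitary C(TwoTorus, Matrix (Fin b) (Fin b) ℂ)) ∧
    (ratP a b * ratQ b =
      Complex.exp (2 * Real.pi * I * ((a : ℝ) / b)) • (ratQ b * ratP a b)) ∧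
    ∃ π : A →⋆ₐ[ℂ] C(TwoTorus, Matrix (Fin b) (Fin b) ℂ),
      π U = ratP a b ∧ π V = ratQ b ∧
      ∀ m n : ℤ, ratTrace b (π (((U ^ m * V ^ n : unitary A) : A)))
        = τ (((U ^ m * V ^ n : unitary A) : A)) := by
  obtain ⟨π, hπU, hπV⟩ := huniv _ ⟨ratP a b, ratP_mem_unitary a b⟩ ⟨ratQ b, ratQ_mem_unitary b⟩
    (ratP_mul_ratQ a b)
  refine ⟨ratP_mem_unitary a b, ratQ_mem_unitary b, ratP_mul_ratQ a b, π, hπU, hπV,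
    fun m n => ?_⟩
  rw [hcanonical, Unitary.apply_coe_zpow_mul_zpow π hπU hπV]
  exact ratTrace_zpow_mul_zpow a b rfl rfl m n

/-- for rational `θ = a/b` (reduced, `b ≥ 1`), the elements
`ratP a b` and `ratQ b` of `C(𝕋²) ⊗ M_b` are unitaries satisfying
`P Q = e^{2πia/b} Q P`, and the induced *-homomorphism `π : A_{a/b} → C(𝕋²) ⊗ M_b`
(from the universal property of `A_{a/b}`, sending `U ↦ P`, `V ↦ Q`) is
trace-preserving, where the trace on the target is Haar integration tensored with the
normalized matrix trace. -/
theorem rational_quantum_torus_embedding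
    (a : ℤ) (b : ℕ) [NeZero b] (hcop : Nat.Coprime a.natAbs b)
    (A : Type) [NormedRing A] [StarRing A] [CStarRing A] [NormedAlgebra ℂ A]
    [StarModule ℂ A] [CompleteSpace A]
    (U V : unitary A)
    (hrel : (U : A) * V =
      Complex.exp (2 * Real.pi * I * ((a : ℝ) / b)) • ((V : A) * (U : A)))
    (huniv : ∀ (B : Type) [NormedRing B] [StarRing B] [CStarRing B]
      [NormedAlgebra ℂ B] [StarModule ℂ B] [CompleteSpace B],
      ∀ u v : unitary B,
      ((u : B) * v = Complex.exp (2 * Real.pi * I * ((a : ℝ) / b)) • ((v : B) * (u : B))) →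
      ∃ φ : A →⋆ₐ[ℂ] B, φ U = u ∧ φ V = v)
    (τ : A →ₗ[ℂ] ℂ)
    (hcanonical : ∀ m n : ℤ,
      τ (((U ^ m * V ^ n : unitary A) : A)) = if m = 0 ∧ n = 0 then 1 else 0) :
    (ratP a b ∈ unitary C(TwoTorus, Matrix (Fin b) (Fin b) ℂ)) ∧
    (ratQ b ∈ unitary C(TwoTorus, Matrix (Fin b) (Fin b) ℂ)) ∧
    (ratP a b * ratQ b =
      Complex.exp (2 * Real.pi * I * ((a : ℝ) / b)) • (ratQ b * ratP a b)) ∧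
    ∃ π : A →⋆ₐ[ℂ] C(TwoTorus, Matrix (Fin b) (Fin b) ℂ),
      π U = ratP a b ∧ π V = ratQ b ∧
      ∀ m n : ℤ, ratTrace b (π (((U ^ m * V ^ n : unitary A) : A)))
        = τ (((U ^ m * V ^ n : unitary A) : A)) :=
  rational_quantum_torus_embedding_general a b A U V huniv τ hcanonical
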